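/- arXiv:1207.2536 — 4 statements merged into one kernel-verified Lean document; each statement's English description precedes it below -/
import Mathlib

section
/- The equilibrium density μ is a probability density on [0,1]: ∫_0^1 μ(x) dx = 1, where μ(x) = (2/(πc)) arcsin(c/(2√(x−x²))) for x ∈ [a,b] and μ(x) = 1/c for x ∈ [0,a] ∪ [b,1]. -/
open Real

/-- The equilibrium density: `μ(x) = (2/(πc)) arcsin(c/(2√(x-x²)))` for `x ∈ [a,b]`,
and `μ(x) = 1/c` otherwise. -/
noncomputable def equilibriumDensity (c : ℝ) (x : ℝ) : ℝ :=
  if x ∈ Set.Icc (1 / 2 - Real.sqrt (1 - c ^ 2) / 2) (1 / 2 + Real.sqrt (1 - c ^ 2) / 2) then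
    (2 / (Real.pi * c)) * Real.arcsin (c / (2 * Real.sqrt (x - x ^ 2)))
  else 1 / c

/-!
The density is `1/c` off `(a, b)`, and on `[a, b]` the substitution `t = 2x - 1` turns it into
`(2/(πc)) arcsin (c / √(1 - t²))` on `[-s, s]`, `s = √(1 - c²)`. This kernel has an explicit odd
primitive, worth `(π/2)(s + c - 1)` at `s`, so the middle part contributes `(s + c - 1)/c` and the
two flat parts `(1 - s)/c`.
-/

open Set MeasureTheory intervalIntegral

theorem HasDerivAt.arcsin_of_sq_add_sq_eq_one {f : ℝ → ℝ} {f' x r : ℝ} (hf : HasDerivAt f f' x)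
    (hr : 0 < r) (h : f x ^ 2 + r ^ 2 = 1) :
    HasDerivAt (fun y => arcsin (f y)) (f' / r) x := by
  have hlt : |f x| < 1 := by
    rw [← sq_lt_one_iff_abs_lt_one]; nlinarith
  have hsqrt : √(1 - f x ^ 2) = r := by
    rw [show 1 - f x ^ 2 = r ^ 2 by linarith, sqrt_sq hr.le]
  have := (hasDerivAt_arcsin (abs_lt.1 hlt).1.ne' (abs_lt.1 hlt).2.ne).comp x hf
  rwa [hsqrt, one_div_mul_eq_div] at this

theorem sqrt_one_sub_sq_pos {t : ℝ} (ht : t ∈ Ioo (-1) 1) : 0 < √(1 - t ^ 2) :=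
  sqrt_pos.2 (by nlinarith [ht.1, ht.2])

theorem sqrt_one_sub_sq_lt_one {t : ℝ} (ht : t ≠ 0) : √(1 - t ^ 2) < 1 := by
  rw [sqrt_lt' one_pos]
  linarith [pow_pos (abs_pos.2 ht) 2, sq_abs t]

/- Integrating by parts leaves `c t² / ((1 - t²) √(s² - t²))`, which splits as
`c / ((1 - t²) √(s² - t²)) - c / √(s² - t²)`; these integrate to the last two arcsines. -/
noncomputable def arcsinKernelPrimitive (c t : ℝ) : ℝ :=
  t * arcsin (c / √(1 - t ^ 2)) + c * arcsin (t / √(1 - c ^ 2))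
    - arcsin (c * t / (√(1 - c ^ 2) * √(1 - t ^ 2)))

theorem hasDerivAt_arcsinKernelPrimitive {c t : ℝ} (ht : t ^ 2 < 1 - c ^ 2) :
    HasDerivAt (arcsinKernelPrimitive c) (arcsin (c / √(1 - t ^ 2))) t := by
  have hs2 : √(1 - c ^ 2) ^ 2 = 1 - c ^ 2 := sq_sqrt (by nlinarith)
  have hu2 : √(1 - t ^ 2) ^ 2 = 1 - t ^ 2 := sq_sqrt (by nlinarith)
  have hr2 : √(1 - c ^ 2 - t ^ 2) ^ 2 = 1 - c ^ 2 - t ^ 2 := sq_sqrt (by linarith)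
  have hs : 0 < √(1 - c ^ 2) := sqrt_pos.2 (by nlinarith)
  have hu : 0 < √(1 - t ^ 2) := sqrt_pos.2 (by nlinarith)
  have hr : 0 < √(1 - c ^ 2 - t ^ 2) := sqrt_pos.2 (by linarith)
  generalize √(1 - c ^ 2 - t ^ 2) = r at hr2 hr
  have hu' : HasDerivAt (fun y => √(1 - y ^ 2)) (-t / √(1 - t ^ 2)) t :=
    (((hasDerivAt_pow 2 t).const_sub 1).sqrt (by nlinarith)).congr_deriv (by field_simp; ring)
  have h1 : HasDerivAt (fun y => arcsin (c / √(1 - y ^ 2)))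
      (c * t / (√(1 - t ^ 2) ^ 2 * r)) t := by
    have hf : HasDerivAt (fun y => c / √(1 - y ^ 2)) (c * t / √(1 - t ^ 2) ^ 3) t :=
      ((hasDerivAt_const t c).div hu' hu.ne').congr_deriv (by field_simp; ring)
    refine (hf.arcsin_of_sq_add_sq_eq_one (r := r / √(1 - t ^ 2)) (by positivity) ?_).congr_deriv ?_
    · field_simp; linear_combination hr2 - hu2
    · field_simp
  have h2 : HasDerivAt (fun y => arcsin (y / √(1 - c ^ 2))) (1 / r) t := by
    refine (((hasDerivAt_id' t).div_const _).arcsin_of_sq_add_sq_eq_one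
      (r := r / √(1 - c ^ 2)) (by positivity) ?_).congr_deriv ?_
    · field_simp; linear_combination hr2 - hs2
    · field_simp
  have h3 : HasDerivAt (fun y => arcsin (c * y / (√(1 - c ^ 2) * √(1 - y ^ 2))))
      (c / (√(1 - t ^ 2) ^ 2 * r)) t := by
    have hf : HasDerivAt (fun y => c * y / (√(1 - c ^ 2) * √(1 - y ^ 2)))
        (c / (√(1 - c ^ 2) * √(1 - t ^ 2) ^ 3)) t :=
      (((hasDerivAt_id' t).const_mul c).div (hu'.const_mul _) (by positivity)).congr_deriv (by
        field_simp; linear_combination c * hu2)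
    refine (hf.arcsin_of_sq_add_sq_eq_one (r := r / (√(1 - c ^ 2) * √(1 - t ^ 2))) (by positivity)
      ?_).congr_deriv ?_
    · field_simp; linear_combination hr2 - √(1 - t ^ 2) ^ 2 * hs2 - (1 - c ^ 2) * hu2
    · field_simp
  refine ((((hasDerivAt_id' t).mul h1).add (h2.const_mul c)).sub h3).congr_deriv ?_
  field_simp
  linear_combination c * hu2

theorem continuousOn_arcsin_div_sqrt_one_sub_sq (c : ℝ) :
    ContinuousOn (fun t => arcsin (c / √(1 - t ^ 2))) (Ioo (-1) 1) :=
  continuous_arcsin.comp_continuousOn <| continuousOn_const.div (by fun_prop)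
    fun _ ht => (sqrt_one_sub_sq_pos ht).ne'

theorem continuousOn_arcsinKernelPrimitive {c : ℝ} (hc : c ^ 2 < 1) :
    ContinuousOn (arcsinKernelPrimitive c) (Ioo (-1) 1) := by
  have hs : √(1 - c ^ 2) ≠ 0 := (sqrt_pos.2 (by linarith)).ne'
  refine ((continuousOn_id.mul (continuousOn_arcsin_div_sqrt_one_sub_sq c)).add
    (by fun_prop)).sub (continuous_arcsin.comp_continuousOn ?_)
  exact (by fun_prop : Continuous fun t : ℝ => c * t).continuousOn.div (by fun_prop)
    fun _ ht => mul_ne_zero hs (sqrt_one_sub_sq_pos ht).ne'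

theorem arcsinKernelPrimitive_neg (c t : ℝ) :
    arcsinKernelPrimitive c (-t) = -arcsinKernelPrimitive c t := by
  simp only [arcsinKernelPrimitive, neg_sq, mul_neg, neg_div, arcsin_neg]
  ring

theorem arcsinKernelPrimitive_sqrt_one_sub_sq {c : ℝ} (hc0 : 0 < c) (hc1 : c < 1) :
    arcsinKernelPrimitive c √(1 - c ^ 2) = π / 2 * (√(1 - c ^ 2) + c - 1) := by
  have hs : √(1 - c ^ 2) ≠ 0 := (sqrt_pos.2 (by nlinarith)).ne'
  have hc : √(1 - √(1 - c ^ 2) ^ 2) = c := by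
    rw [sq_sqrt (by nlinarith), sub_sub_cancel, sqrt_sq hc0.le]
  rw [arcsinKernelPrimitive, hc, div_self hc0.ne', div_self hs, mul_comm c √(1 - c ^ 2),
    div_self (mul_ne_zero hs hc0.ne'), arcsin_one]
  ring

theorem integral_arcsin_div_sqrt_one_sub_sq {c : ℝ} (hc0 : 0 < c) (hc1 : c < 1) :
    ∫ t in -√(1 - c ^ 2)..√(1 - c ^ 2), arcsin (c / √(1 - t ^ 2))
      = π * (√(1 - c ^ 2) + c - 1) := by
  have hs : 0 < √(1 - c ^ 2) := sqrt_one_sub_sq_pos ⟨by linarith, hc1⟩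
  have hs1 := sqrt_one_sub_sq_lt_one hc0.ne'
  have hsub : Icc (-√(1 - c ^ 2)) √(1 - c ^ 2) ⊆ Ioo (-1) 1 :=
    Icc_subset_Ioo (by linarith) hs1
  rw [integral_eq_sub_of_hasDerivAt_of_le (neg_le_self hs.le)
      ((continuousOn_arcsinKernelPrimitive (by nlinarith)).mono hsub)
      (fun t ht => hasDerivAt_arcsinKernelPrimitive ?_)
      ((continuousOn_arcsin_div_sqrt_one_sub_sq c).mono
        ((uIcc_of_le (neg_le_self hs.le)).trans_subset hsub)).intervalIntegrable,
    arcsinKernelPrimitive_neg, arcsinKernelPrimitive_sqrt_one_sub_sq hc0 hc1]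
  · ring
  · rw [← sq_sqrt (show 0 ≤ 1 - c ^ 2 by nlinarith), sq_lt_sq, abs_of_pos hs]
    exact abs_lt.2 ht

theorem sqrt_one_sub_two_mul_sub_one_sq (x : ℝ) :
    √(1 - (2 * x - 1) ^ 2) = 2 * √(x - x ^ 2) := by
  rw [show 1 - (2 * x - 1) ^ 2 = 2 ^ 2 * (x - x ^ 2) by ring, sqrt_mul (by norm_num),
    sqrt_sq zero_le_two]

theorem equilibriumDensity_of_mem_Icc {c x : ℝ}
    (hx : x ∈ Icc (1 / 2 - √(1 - c ^ 2) / 2) (1 / 2 + √(1 - c ^ 2) / 2)) :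
    equilibriumDensity c x = 2 / (π * c) * arcsin (c / √(1 - (2 * x - 1) ^ 2)) := by
  rw [equilibriumDensity, if_pos hx, sqrt_one_sub_two_mul_sub_one_sq]

theorem equilibriumDensity_of_not_mem_Ioo {c x : ℝ} (hc0 : 0 < c) (hc1 : c < 1)
    (hx : x ∉ Ioo (1 / 2 - √(1 - c ^ 2) / 2) (1 / 2 + √(1 - c ^ 2) / 2)) :
    equilibriumDensity c x = 1 / c := by
  by_cases hmem : x ∈ Icc (1 / 2 - √(1 - c ^ 2) / 2) (1 / 2 + √(1 - c ^ 2) / 2)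
  · have hs2 : √(1 - c ^ 2) ^ 2 = 1 - c ^ 2 := sq_sqrt (by nlinarith)
    have hx2 : (2 * x - 1) ^ 2 = 1 - c ^ 2 := by
      rw [mem_Ioo, not_and_or, not_lt, not_lt] at hx
      obtain rfl | rfl : x = 1 / 2 - √(1 - c ^ 2) / 2 ∨ x = 1 / 2 + √(1 - c ^ 2) / 2 := by
        rcases hx with hx | hx
        exacts [Or.inl (le_antisymm hx hmem.1), Or.inr (le_antisymm hmem.2 hx)]
      all_goals linear_combination hs2
    rw [equilibriumDensity_of_mem_Icc hmem, hx2, sub_sub_cancel, sqrt_sq hc0.le,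
      div_self hc0.ne', arcsin_one]
    field_simp
  · rw [equilibriumDensity, if_neg hmem]

theorem eqOn_equilibriumDensity_Icc_zero {c : ℝ} (hc0 : 0 < c) (hc1 : c < 1) :
    EqOn (equilibriumDensity c) (fun _ => 1 / c) (uIcc 0 (1 / 2 - √(1 - c ^ 2) / 2)) :=
  fun x hx => equilibriumDensity_of_not_mem_Ioo hc0 hc1 fun h => by
    rw [uIcc_of_le (by linarith [sqrt_one_sub_sq_lt_one hc0.ne'])] at hx
    linarith [hx.2, h.1]

theorem eqOn_equilibriumDensity_Icc_one {c : ℝ} (hc0 : 0 < c) (hc1 : c < 1) :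
    EqOn (equilibriumDensity c) (fun _ => 1 / c) (uIcc (1 / 2 + √(1 - c ^ 2) / 2) 1) :=
  fun x hx => equilibriumDensity_of_not_mem_Ioo hc0 hc1 fun h => by
    rw [uIcc_of_le (by linarith [sqrt_one_sub_sq_lt_one hc0.ne'])] at hx
    linarith [hx.1, h.2]

theorem eqOn_equilibriumDensity_middle (c : ℝ) :
    EqOn (equilibriumDensity c) (fun x => 2 / (π * c) * arcsin (c / √(1 - (2 * x - 1) ^ 2)))
      (uIcc (1 / 2 - √(1 - c ^ 2) / 2) (1 / 2 + √(1 - c ^ 2) / 2)) := fun _ hx =>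
  equilibriumDensity_of_mem_Icc (by rwa [uIcc_of_le (by linarith [sqrt_nonneg (1 - c ^ 2)])] at hx)

theorem intervalIntegrable_equilibriumDensity_middle {c : ℝ} (hc : c ≠ 0) :
    IntervalIntegrable (equilibriumDensity c) volume
      (1 / 2 - √(1 - c ^ 2) / 2) (1 / 2 + √(1 - c ^ 2) / 2) := by
  refine (ContinuousOn.intervalIntegrable ?_).congr
    ((eqOn_equilibriumDensity_middle c).symm.mono uIoc_subset_uIcc)
  refine continuousOn_const.mul ((continuousOn_arcsin_div_sqrt_one_sub_sq c).comp
    (by fun_prop : Continuous fun x : ℝ => 2 * x - 1).continuousOn fun x hx => ?_)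
  have hs1 := sqrt_one_sub_sq_lt_one hc
  rw [uIcc_of_le (by linarith [sqrt_nonneg (1 - c ^ 2)])] at hx
  constructor <;> linarith [hx.1, hx.2]

theorem integral_equilibriumDensity_middle {c : ℝ} (hc0 : 0 < c) (hc1 : c < 1) :
    ∫ x in (1 / 2 - √(1 - c ^ 2) / 2)..(1 / 2 + √(1 - c ^ 2) / 2), equilibriumDensity c x
      = (√(1 - c ^ 2) + c - 1) / c := by
  have h_kernel := integral_arcsin_div_sqrt_one_sub_sq hc0 hc1
  set s := √(1 - c ^ 2)
  rw [integral_congr (eqOn_equilibriumDensity_middle c), intervalIntegral.integral_const_mul,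
    integral_comp_mul_sub (fun t => arcsin (c / √(1 - t ^ 2))) two_ne_zero 1,
    show 2 * (1 / 2 - s / 2) - 1 = -s by ring, show 2 * (1 / 2 + s / 2) - 1 = s by ring,
    h_kernel, smul_eq_mul]
  field_simp

/-- The equilibrium density is a probability density on `[0,1]`: `∫₀¹ μ(x) dx = 1`. -/
theorem stmt5 (c : ℝ) (hc : c ∈ Set.Ioo (0 : ℝ) 1) :
    ∫ x in (0 : ℝ)..1, equilibriumDensity c x = 1 := by
  obtain ⟨hc0, hc1⟩ := hc
  have h_left := eqOn_equilibriumDensity_Icc_zero hc0 hc1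
  have h_right := eqOn_equilibriumDensity_Icc_one hc0 hc1
  have hI_mid := intervalIntegrable_equilibriumDensity_middle hc0.ne'
  have hI_left : IntervalIntegrable (equilibriumDensity c) volume 0 _ :=
    intervalIntegrable_const.congr (h_left.symm.mono uIoc_subset_uIcc)
  have hI_right : IntervalIntegrable (equilibriumDensity c) volume _ 1 :=
    intervalIntegrable_const.congr (h_right.symm.mono uIoc_subset_uIcc)
  rw [← integral_add_adjacent_intervals hI_left (hI_mid.trans hI_right),
    ← integral_add_adjacent_intervals hI_mid hI_right, integral_congr h_left,
    integral_congr h_right, integral_equilibriumDensity_middle hc0 hc1,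
    intervalIntegral.integral_const, intervalIntegral.integral_const, smul_eq_mul, smul_eq_mul]
  field_simp
  ring
end

section
/- For every x ∈ (b,1), the function φ*(x) = −∫_b^x [ (2/c) log( (s + √((s−a)(s−b)) + c/2)/(1 − s − √((s−a)(s−b)) + c/2) ) + (1/c) log((1−s)/s) ] ds is strictly negative. -/
/-! Write `r = √((s - a)(s - b))`, so that `r² = s² - s + c²/4`, `N = s + r + c/2` and
`D = 1 - s - r + c/2`. The integrand is `(1/c) log (N² (1 - s) / (D² s))`, and
`N² (1 - s) - D² s = r u` with `u = 4s(1 - s) + c - 2r(2s - 1)`. Since `u` times its conjugate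
`4s(1 - s) + c + 2r(2s - 1) > 0` equals `4s(1 - s)(1 + c)² > 0`, the integrand is positive on
`(b, 1)`, hence so is its integral over `[b, x]`. -/

open Real Set

/-- The integrand of `φ*`, with `r` standing for `√((s - a)(s - b))`. -/
noncomputable def phiStarIntegrand (c r s : ℝ) : ℝ :=
  (2 / c) * log ((s + r + c / 2) / (1 - s - r + c / 2)) + (1 / c) * log ((1 - s) / s)

lemma sub_mul_sub_eq_of_roots {c a b : ℝ} (hc : c ^ 2 ≤ 1)
    (ha : a = 1 / 2 - √(1 - c ^ 2) / 2) (hb : b = 1 / 2 + √(1 - c ^ 2) / 2) (s : ℝ) :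
    (s - a) * (s - b) = s ^ 2 - s + c ^ 2 / 4 := by
  have hsq : √(1 - c ^ 2) ^ 2 = 1 - c ^ 2 := sq_sqrt (by linarith)
  rw [ha, hb]
  linear_combination (-1 / 4 : ℝ) * hsq

lemma one_sub_sub_add_pos {c r s : ℝ} (hc : 0 ≤ c) (hs : s < 1)
    (hr : r ^ 2 = s ^ 2 - s + c ^ 2 / 4) : 0 < 1 - s - r + c / 2 := by
  nlinarith [mul_nonneg hc (sub_pos.2 hs).le]

lemma sq_mul_lt_sq_mul {c r s : ℝ} (hc : 0 < c) (hs₀ : 1 / 2 ≤ s) (hs₁ : s < 1) (hr₀ : 0 < r)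
    (hr : r ^ 2 = s ^ 2 - s + c ^ 2 / 4) :
    (1 - s - r + c / 2) ^ 2 * s < (s + r + c / 2) ^ 2 * (1 - s) := by
  set u := 4 * s * (1 - s) + c - 2 * r * (2 * s - 1)
  set v := 4 * s * (1 - s) + c + 2 * r * (2 * s - 1)
  have huv : u * v = 4 * s * (1 - s) * (1 + c) ^ 2 := by
    linear_combination (-4 : ℝ) * (2 * s - 1) ^ 2 * hr
  have hv : 0 < v := by nlinarith
  have hu : 0 < u := by
    refine pos_of_mul_pos_left (huv ▸ ?_) hv.le
    have : 0 < 1 - s := by linarith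
    positivity
  have hdiff : (s + r + c / 2) ^ 2 * (1 - s) - (1 - s - r + c / 2) ^ 2 * s = r * u := by
    linear_combination (2 * s - 1) * hr
  nlinarith [mul_pos hr₀ hu]

lemma phiStarIntegrand_pos {c r s : ℝ} (hc : 0 < c) (hs₀ : 1 / 2 ≤ s) (hs₁ : s < 1)
    (hr₀ : 0 < r) (hr : r ^ 2 = s ^ 2 - s + c ^ 2 / 4) : 0 < phiStarIntegrand c r s := by
  have hD : 0 < 1 - s - r + c / 2 := one_sub_sub_add_pos hc.le hs₁ hr
  have hN : 0 < s + r + c / 2 := by linarith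
  have hs : 0 < s := by linarith
  have h1s : 0 < 1 - s := by linarith
  have hprod : 1 < ((s + r + c / 2) / (1 - s - r + c / 2)) ^ 2 * ((1 - s) / s) := by
    rw [div_pow, div_mul_div_comm, one_lt_div (by positivity)]
    exact sq_mul_lt_sq_mul hc hs₀ hs₁ hr₀ hr
  have hlog : phiStarIntegrand c r s
      = (1 / c) * log (((s + r + c / 2) / (1 - s - r + c / 2)) ^ 2 * ((1 - s) / s)) := by
    rw [phiStarIntegrand, log_mul (by positivity) (by positivity), log_pow]
    push_cast
    ring
  rw [hlog]
  exact mul_pos (by positivity) (log_pos hprod)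

lemma continuousOn_phiStarIntegrand {c : ℝ} {r : ℝ → ℝ} {S : Set ℝ} (hc : 0 ≤ c)
    (hr : ContinuousOn r S) (hS : S ⊆ Ioo 0 1) (hr₀ : ∀ s ∈ S, 0 ≤ r s)
    (hrs : ∀ s ∈ S, r s ^ 2 = s ^ 2 - s + c ^ 2 / 4) :
    ContinuousOn (fun s => phiStarIntegrand c (r s) s) S := by
  have hD (s : ℝ) (hs : s ∈ S) : 1 - s - r s + c / 2 ≠ 0 :=
    (one_sub_sub_add_pos hc (hS hs).2 (hrs s hs)).ne'
  have hN (s : ℝ) (hs : s ∈ S) : (s + r s + c / 2) / (1 - s - r s + c / 2) ≠ 0 :=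
    div_ne_zero (by linarith [(hS hs).1, hr₀ s hs]) (hD s hs)
  have hs₀ (s : ℝ) (hs : s ∈ S) : s ≠ 0 := (hS hs).1.ne'
  have hs₁ (s : ℝ) (hs : s ∈ S) : (1 - s) / s ≠ 0 :=
    div_ne_zero (sub_ne_zero.2 (hS hs).2.ne') (hs₀ s hs)
  unfold phiStarIntegrand
  fun_prop (disch := assumption)

/-- For every `x ∈ (b,1)`,
`φ*(x) = -∫_b^x [(2/c) log((s + √((s-a)(s-b)) + c/2)/(1 - s - √((s-a)(s-b)) + c/2))
                 + (1/c) log((1-s)/s)] ds < 0`. -/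
theorem stmt8 (c a b : ℝ) (hc : c ∈ Set.Ioo (0 : ℝ) 1)
    (ha : a = 1 / 2 - Real.sqrt (1 - c ^ 2) / 2)
    (hb : b = 1 / 2 + Real.sqrt (1 - c ^ 2) / 2) :
    ∀ x ∈ Set.Ioo b 1,
      -(∫ s in b..x,
          ((2 / c) * Real.log ((s + Real.sqrt ((s - a) * (s - b)) + c / 2) /
              (1 - s - Real.sqrt ((s - a) * (s - b)) + c / 2)) +
            (1 / c) * Real.log ((1 - s) / s))) < 0 := by
  obtain ⟨hc₀, hc₁⟩ := hc
  rintro x ⟨hbx, hx₁⟩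
  have hb₀ : 1 / 2 ≤ b := by rw [hb]; linarith [sqrt_nonneg (1 - c ^ 2)]
  have hab : a ≤ b := by rw [ha, hb]; linarith [sqrt_nonneg (1 - c ^ 2)]
  have hr (s : ℝ) (hs : b ≤ s) : √((s - a) * (s - b)) ^ 2 = s ^ 2 - s + c ^ 2 / 4 := by
    rw [sq_sqrt (by nlinarith), sub_mul_sub_eq_of_roots (by nlinarith) ha hb]
  rw [neg_lt_zero]
  show 0 < ∫ s in b..x, phiStarIntegrand c √((s - a) * (s - b)) s
  refine intervalIntegral.intervalIntegral_pos_of_pos_on ?_ (fun s hs => ?_) hbx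
  · have hI : uIcc b x = Icc b x := uIcc_of_le hbx.le
    refine (continuousOn_phiStarIntegrand hc₀.le (by fun_prop) (fun s hs => ?_)
      (fun _ _ => sqrt_nonneg _) (fun s hs => hr s (hI ▸ hs).1)).intervalIntegrable
    rw [hI] at hs
    exact ⟨by linarith [hs.1], hs.2.trans_lt hx₁⟩
  · exact phiStarIntegrand_pos hc₀ (hb₀.trans hs.1.le) (hs.2.trans hx₁)
      (sqrt_pos.2 (mul_pos (by linarith [hs.1]) (by linarith [hs.1]))) (hr s hs.1.le)
end

section
/- For x ∈ (b,1), the integrand F(x) := (2/c) log( (x + √((x−a)(x−b)) + c/2)/(1 − x − √((x−a)(x−b)) + c/2) ) + (1/c) log((1−x)/x) is strictly positive; equivalently, ((x + √((x−a)(x−b)) + c/2)/(1 − x − √((x−a)(x−b)) + c/2))² · (1−x)/x > 1. -/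
/-!
Write `k = c/2` and `s = √((x-a)(x-b))`, so that `s² = x² - x + k²`, and put `p = √x`,
`q = √(1-x)`, `t = pq`; then `s² = k² - t²` and `0 < t < k`. With `N = x + s + k` and
`D = 1 - x - s + k` one has `Nq - Dp = s(p+q) - (p-q)(k-t)`, and this is positive because
`s²(p+q)² - (p-q)²(k-t)² = (k-t)(4kpq + 2t(p²+q²)) > 0`. Hence `N²(1-x) > D²x`, which is the
second claim; taking logarithms gives the first.
-/

open Real

lemma sub_mul_sub_lt_mul_add {k t s p q : ℝ} (ht : 0 ≤ t) (htk : t < k) (hp : 0 < p)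
    (hq : 0 < q) (hs : 0 ≤ s) (hs2 : s ^ 2 = k ^ 2 - t ^ 2) :
    (p - q) * (k - t) < s * (p + q) := by
  refine lt_of_pow_lt_pow_left₀ 2 (by positivity) ?_
  have hk : 0 < k := ht.trans_lt htk
  calc ((p - q) * (k - t)) ^ 2
      < ((p - q) * (k - t)) ^ 2 + (k - t) * (4 * k * (p * q) + 2 * t * (p ^ 2 + q ^ 2)) := by
        have : 0 < 4 * k * (p * q) + 2 * t * (p ^ 2 + q ^ 2) := by positivity
        nlinarith [sub_pos.2 htk]
    _ = (s * (p + q)) ^ 2 := by linear_combination -(p + q) ^ 2 * hs2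

lemma one_sub_sub_add_pos_s9 {x k s : ℝ} (hx1 : x < 1) (hk : 0 < k) (hs : 0 ≤ s)
    (hs2 : s ^ 2 = x ^ 2 - x + k ^ 2) : 0 < 1 - x - s + k := by
  have hprod : (1 - x - s + k) * (1 - x + k + s) = (1 - x) * (1 + 2 * k) := by
    linear_combination -hs2
  have : 0 < (1 - x - s + k) * (1 - x + k + s) := by
    rw [hprod]; exact mul_pos (by linarith) (by linarith)
  exact pos_of_mul_pos_left this (by linarith)

lemma sq_one_sub_sub_add_mul_lt {x k s : ℝ} (hx0 : 0 < x) (hx1 : x < 1) (hk : 0 < k)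
    (hs : 0 < s) (hs2 : s ^ 2 = x ^ 2 - x + k ^ 2) :
    (1 - x - s + k) ^ 2 * x < (x + s + k) ^ 2 * (1 - x) := by
  set p := √x
  set q := √(1 - x)
  have hp : 0 < p := sqrt_pos.2 hx0
  have hq : 0 < q := sqrt_pos.2 (sub_pos.2 hx1)
  have hp2 : p ^ 2 = x := sq_sqrt hx0.le
  have hq2 : q ^ 2 = 1 - x := sq_sqrt (sub_pos.2 hx1).le
  have hst : s ^ 2 = k ^ 2 - (p * q) ^ 2 := by rw [mul_pow, hp2, hq2, hs2]; ring
  have htk : p * q < k := by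
    refine lt_of_pow_lt_pow_left₀ 2 hk.le ?_
    nlinarith
  have hlt : (1 - x - s + k) * p < (x + s + k) * q := by
    have := sub_mul_sub_lt_mul_add (by positivity) htk hp hq hs.le hst
    linear_combination this + q * hp2 - p * hq2
  have hD := one_sub_sub_add_pos_s9 hx1 hk hs.le hs2
  have := pow_lt_pow_left₀ hlt (by positivity) two_ne_zero
  rwa [mul_pow, mul_pow, hp2, hq2] at this

lemma one_lt_sq_div_mul_div {x k s : ℝ} (hx0 : 0 < x) (hx1 : x < 1) (hk : 0 < k)
    (hs : 0 < s) (hs2 : s ^ 2 = x ^ 2 - x + k ^ 2) :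
    1 < ((x + s + k) / (1 - x - s + k)) ^ 2 * ((1 - x) / x) := by
  have hD := one_sub_sub_add_pos_s9 hx1 hk hs.le hs2
  rw [div_pow, div_mul_div_comm, one_lt_div (by positivity)]
  exact sq_one_sub_sub_add_mul_lt hx0 hx1 hk hs hs2

lemma two_mul_log_add_log_pos {r y : ℝ} (hr : 0 < r) (hy : 0 < y) (h : 1 < r ^ 2 * y) :
    0 < 2 * log r + log y := by
  have := log_pos h
  rwa [log_mul (by positivity) hy.ne', log_pow, Nat.cast_ofNat] at this

/-- For `x ∈ (b,1)` the integrand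
`F(x) = (2/c) log((x + √((x-a)(x-b)) + c/2)/(1 - x - √((x-a)(x-b)) + c/2))
        + (1/c) log((1-x)/x)` is strictly positive; equivalently
`((x + √((x-a)(x-b)) + c/2)/(1 - x - √((x-a)(x-b)) + c/2))² (1-x)/x > 1`. -/
theorem stmt9 (c a b : ℝ) (hc : c ∈ Set.Ioo (0 : ℝ) 1)
    (ha : a = 1 / 2 - Real.sqrt (1 - c ^ 2) / 2)
    (hb : b = 1 / 2 + Real.sqrt (1 - c ^ 2) / 2) :
    ∀ x ∈ Set.Ioo b 1,
      0 < (2 / c) * Real.log ((x + Real.sqrt ((x - a) * (x - b)) + c / 2) /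
            (1 - x - Real.sqrt ((x - a) * (x - b)) + c / 2)) +
          (1 / c) * Real.log ((1 - x) / x) ∧
      1 < ((x + Real.sqrt ((x - a) * (x - b)) + c / 2) /
            (1 - x - Real.sqrt ((x - a) * (x - b)) + c / 2)) ^ 2 * ((1 - x) / x) := by
  obtain ⟨hc0, hc1⟩ := hc
  rintro x ⟨hbx, hx1⟩
  have hr : 0 ≤ √(1 - c ^ 2) := sqrt_nonneg _
  have hab : (x - a) * (x - b) = x ^ 2 - x + (c / 2) ^ 2 := by
    have : √(1 - c ^ 2) ^ 2 = 1 - c ^ 2 := sq_sqrt (by nlinarith)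
    rw [ha, hb]; linear_combination -this / 4
  have hx0 : 0 < x := by linarith
  have hprod : 0 < (x - a) * (x - b) := mul_pos (by linarith) (by linarith)
  have hs2 : √((x - a) * (x - b)) ^ 2 = x ^ 2 - x + (c / 2) ^ 2 := by rw [sq_sqrt hprod.le, hab]
  have key := one_lt_sq_div_mul_div hx0 hx1 (half_pos hc0) (sqrt_pos.2 hprod) hs2
  refine ⟨?_, key⟩
  have hD := one_sub_sub_add_pos_s9 hx1 (half_pos hc0) (sqrt_nonneg _) hs2
  have hlog := two_mul_log_add_log_pos (by positivity) (div_pos (by linarith) hx0) key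
  calc (0 : ℝ) < (2 * log ((x + √((x - a) * (x - b)) + c / 2) /
          (1 - x - √((x - a) * (x - b)) + c / 2)) + log ((1 - x) / x)) / c := div_pos hlog hc0
    _ = _ := by ring
end

section
/- For every x ∈ (0,a), the function φ̃(x) = ∫_a^x [ (2/c) log( (s − √((a−s)(b−s)) + c/2)/(1 − s + √((a−s)(b−s)) + c/2) ) + (1/c) log((1−s)/s) ] ds·(−1) is strictly negative; equivalently the derivative φ̃'(x) = −(2/c) log( (x − √((a−x)(b−x)) + c/2)/(1 − x + √((a−x)(b−x)) + c/2) ) − (1/c) log((1−x)/x) is strictly positive on (0,a). -/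
/-!
Put `r = √((a - x)(b - x))`; since `a + b = 1` and `ab = c²/4`, `r² = x² - x + c²/4`.
Both logarithms combine into `(1/c) log(N²(1 - x) / (D² x))` with `N = x - r + c/2`,
`D = 1 - x + r + c/2`, so `φ̃' > 0` amounts to `N²(1 - x) < D² x`. Using `r²` to eliminate the
even powers of `r`, `D² x - N²(1 - x) = 2r (2x(1 - x) + c/2 - r(1 - 2x))`, and the last factor is
positive because `(2x(1 - x) + c/2)² - r²(1 - 2x)² = x(1 - x)(1 + c)²`. The integral of the
positive continuous function `φ̃'` over `[x, a]` is then positive.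
-/

open Real Set

/-- The derivative `φ̃'` of the statement. -/
noncomputable def phiDeriv (a b c x : ℝ) : ℝ :=
  -(2 / c) * log ((x - √((a - x) * (b - x)) + c / 2) / (1 - x + √((a - x) * (b - x)) + c / 2)) -
    (1 / c) * log ((1 - x) / x)

section Algebra

variable {x c r : ℝ}

lemma sub_add_half_pos_of_sq_eq (hx : 0 < x) (hc : 0 < c) (hr : r ^ 2 = x ^ 2 - x + c ^ 2 / 4) :
    0 < x - r + c / 2 := by
  have hsq : r ^ 2 < (x + c / 2) ^ 2 := by nlinarith
  linarith [lt_of_pow_lt_pow_left₀ 2 (by positivity) hsq]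

lemma sq_mul_one_sub_lt_sq_mul (hx0 : 0 < x) (hx1 : x < 1) (hc : 0 < c) (hr : 0 < r)
    (hr2 : r ^ 2 = x ^ 2 - x + c ^ 2 / 4) :
    (x - r + c / 2) ^ 2 * (1 - x) < (1 - x + r + c / 2) ^ 2 * x := by
  have hsq : (r * (1 - 2 * x)) ^ 2 < (2 * x * (1 - x) + c / 2) ^ 2 := by
    have hdiff : (2 * x * (1 - x) + c / 2) ^ 2 - (r * (1 - 2 * x)) ^ 2
        = x * (1 - x) * (1 + c) ^ 2 := by
      linear_combination (-(1 - 2 * x) ^ 2) * hr2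
    nlinarith [mul_pos (mul_pos hx0 (sub_pos.mpr hx1)) (by positivity : (0 : ℝ) < (1 + c) ^ 2)]
  have hlt : r * (1 - 2 * x) < 2 * x * (1 - x) + c / 2 :=
    lt_of_pow_lt_pow_left₀ 2 (by nlinarith) hsq
  have hident : (1 - x + r + c / 2) ^ 2 * x - (x - r + c / 2) ^ 2 * (1 - x)
      = 2 * r * (2 * x * (1 - x) + c / 2 - r * (1 - 2 * x)) := by
    linear_combination (1 - 2 * x) * hr2
  nlinarith [mul_pos hr (sub_pos.mpr hlt)]

lemma neg_log_div_sub_log_one_sub_div_pos {N D : ℝ} (hN : 0 < N) (hD : 0 < D) (hx0 : 0 < x)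
    (hx1 : x < 1) (hc : 0 < c) (h : N ^ 2 * (1 - x) < D ^ 2 * x) :
    0 < -(2 / c) * log (N / D) - (1 / c) * log ((1 - x) / x) := by
  have hx1' : 0 < 1 - x := sub_pos.mpr hx1
  have hcombine : 2 * log (N / D) + log ((1 - x) / x) = log ((N / D) ^ 2 * ((1 - x) / x)) := by
    rw [log_mul (by positivity) (by positivity), log_pow]
    push_cast
    ring
  have hlt_one : (N / D) ^ 2 * ((1 - x) / x) < 1 := by
    rw [div_pow, div_mul_div_comm, div_lt_one (by positivity)]
    exact h
  have hlog : 2 * log (N / D) + log ((1 - x) / x) < 0 :=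
    hcombine ▸ log_neg (by positivity) hlt_one
  have hrewrite : -(2 / c) * log (N / D) - (1 / c) * log ((1 - x) / x)
      = -(2 * log (N / D) + log ((1 - x) / x)) / c := by
    ring
  rw [hrewrite]
  exact div_pos (neg_pos.mpr hlog) hc

end Algebra

section Roots

variable {a b c : ℝ}

lemma sq_sqrt_sub_mul_sub {s : ℝ} (hsum : a + b = 1) (hprod : a * b = c ^ 2 / 4) (hab : a ≤ b)
    (hs : s ≤ a) : √((a - s) * (b - s)) ^ 2 = s ^ 2 - s + c ^ 2 / 4 := by
  rw [sq_sqrt (mul_nonneg (by linarith) (by linarith))]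
  linear_combination hprod - s * hsum

lemma phiDeriv_pos {x : ℝ} (hsum : a + b = 1) (hprod : a * b = c ^ 2 / 4) (hab : a ≤ b)
    (hc : 0 < c) (hx0 : 0 < x) (hxa : x < a) : 0 < phiDeriv a b c x := by
  have hr : 0 < √((a - x) * (b - x)) := sqrt_pos.mpr (mul_pos (by linarith) (by linarith))
  have hr2 := sq_sqrt_sub_mul_sub hsum hprod hab hxa.le
  have hx1 : x < 1 := by linarith
  exact neg_log_div_sub_log_one_sub_div_pos (sub_add_half_pos_of_sq_eq hx0 hc hr2)
    (by linarith) hx0 hx1 hc (sq_mul_one_sub_lt_sq_mul hx0 hx1 hc hr hr2)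

lemma continuousOn_phiDeriv {x : ℝ} (hsum : a + b = 1) (hprod : a * b = c ^ 2 / 4) (hab : a ≤ b)
    (hc : 0 < c) (hx0 : 0 < x) : ContinuousOn (phiDeriv a b c) (Icc x a) := by
  have hs0 : ∀ s ∈ Icc x a, 0 < s := fun s hs => hx0.trans_le hs.1
  have hs1 : ∀ s ∈ Icc x a, s < 1 := fun s hs => by linarith [hs.2]
  have hN : ∀ s ∈ Icc x a, 0 < s - √((a - s) * (b - s)) + c / 2 := fun s hs =>
    sub_add_half_pos_of_sq_eq (hs0 s hs) hc (sq_sqrt_sub_mul_sub hsum hprod hab hs.2)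
  have hD : ∀ s ∈ Icc x a, 0 < 1 - s + √((a - s) * (b - s)) + c / 2 := fun s hs => by
    linarith [hs1 s hs, sqrt_nonneg ((a - s) * (b - s))]
  have hsqrt : ContinuousOn (fun s : ℝ => √((a - s) * (b - s))) (Icc x a) := by fun_prop
  refine ContinuousOn.sub (continuousOn_const.mul (ContinuousOn.log ?_ ?_))
    (continuousOn_const.mul (ContinuousOn.log ?_ ?_))
  · exact ((continuousOn_id.sub hsqrt).add continuousOn_const).div
      (((continuousOn_const.sub continuousOn_id).add hsqrt).add continuousOn_const)
      fun s hs => (hD s hs).ne'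
  · exact fun s hs => (div_pos (hN s hs) (hD s hs)).ne'
  · exact (continuousOn_const.sub continuousOn_id).div continuousOn_id fun s hs => (hs0 s hs).ne'
  · exact fun s hs => (div_pos (sub_pos.mpr (hs1 s hs)) (hs0 s hs)).ne'

end Roots

/-- For every `x ∈ (0,a)`,
`φ̃(x) = -∫_a^x [(2/c) log((s - √((a-s)(b-s)) + c/2)/(1 - s + √((a-s)(b-s)) + c/2))
                + (1/c) log((1-s)/s)] ds < 0`,
and equivalently the derivative
`φ̃'(x) = -(2/c) log((x - √((a-x)(b-x)) + c/2)/(1 - x + √((a-x)(b-x)) + c/2))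
          - (1/c) log((1-x)/x)` is strictly positive on `(0,a)`. -/
theorem stmt10 (c a b : ℝ) (hc : c ∈ Set.Ioo (0 : ℝ) 1)
    (ha : a = 1 / 2 - Real.sqrt (1 - c ^ 2) / 2)
    (hb : b = 1 / 2 + Real.sqrt (1 - c ^ 2) / 2) :
    ∀ x ∈ Set.Ioo 0 a,
      (-(∫ s in a..x,
          ((2 / c) * Real.log ((s - Real.sqrt ((a - s) * (b - s)) + c / 2) /
              (1 - s + Real.sqrt ((a - s) * (b - s)) + c / 2)) +
            (1 / c) * Real.log ((1 - s) / s))) < 0) ∧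
      0 < -(2 / c) * Real.log ((x - Real.sqrt ((a - x) * (b - x)) + c / 2) /
            (1 - x + Real.sqrt ((a - x) * (b - x)) + c / 2)) -
          (1 / c) * Real.log ((1 - x) / x) := by
  obtain ⟨hc0, hc1⟩ := hc
  have hsum : a + b = 1 := by rw [ha, hb]; ring
  have hprod : a * b = c ^ 2 / 4 := by
    rw [ha, hb]
    nlinarith [sq_sqrt (by nlinarith : (0 : ℝ) ≤ 1 - c ^ 2)]
  have hab : a ≤ b := by rw [ha, hb]; linarith [sqrt_nonneg (1 - c ^ 2)]
  rintro x ⟨hx0, hxa⟩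
  refine ⟨?_, phiDeriv_pos hsum hprod hab hc0 hx0 hxa⟩
  have hint : 0 < ∫ s in x..a, phiDeriv a b c s :=
    intervalIntegral.intervalIntegral_pos_of_pos_on
      ((continuousOn_phiDeriv hsum hprod hab hc0 hx0).intervalIntegrable_of_Icc hxa.le)
      (fun s hs => phiDeriv_pos hsum hprod hab hc0 (hx0.trans hs.1) hs.2) hxa
  rw [intervalIntegral.integral_symm, neg_neg]
  refine (le_of_eq ?_).trans_lt (neg_neg_of_pos hint)
  rw [← intervalIntegral.integral_neg]
  congr 1
  ext s
  rw [phiDeriv]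
  ring
end
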